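/- Let 𝒜 be an abelian category and ℳ ⊆ 𝒜 a full subcategory that is covariantly finite and cogenerating, and contravariantly finite and generating. Then an object S ∈ ℳ is Schur simple in ℳ (every non-zero morphism X → S with X ∈ ℳ is an epimorphism and every non-zero morphism S → Y with Y ∈ ℳ is a monomorphism) if and only if S is a simple object of 𝒜. -/
import Mathlib


open CategoryTheory CategoryTheory.Limits

/-- An object `S` (belonging to the subcategory given by the predicate `P`) is Schur simple
in the subcategory: it is non-zero, every non-zero morphism into it from an object of the
subcategory is an epimorphism, and every non-zero morphism out of it to an object of the
subcategory is a monomorphism. -/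
def SchurSimpleIn {A : Type*} [Category A] [Abelian A] (P : A → Prop) (S : A) : Prop :=
  ¬ IsZero S ∧
  (∀ (X : A), P X → ∀ f : X ⟶ S, f ≠ 0 → Epi f) ∧
  (∀ (Y : A), P Y → ∀ f : S ⟶ Y, f ≠ 0 → Mono f)

theorem schur_simple_iff_simple
    {A : Type*} [Category A] [Abelian A] (P : A → Prop)
    -- covariantly finite: every object admits a left approximation
    (hcov : ∀ X : A, ∃ (M : A) (_ : P M) (f : X ⟶ M),
      ∀ (M' : A), P M' → ∀ g : X ⟶ M', ∃ h : M ⟶ M', f ≫ h = g)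
    -- cogenerating: every object embeds into an object of the subcategory
    (hcogen : ∀ X : A, ∃ (M : A) (_ : P M) (f : X ⟶ M), Mono f)
    -- contravariantly finite: every object admits a right approximation
    (hcontra : ∀ X : A, ∃ (M : A) (_ : P M) (f : M ⟶ X),
      ∀ (M' : A), P M' → ∀ g : M' ⟶ X, ∃ h : M' ⟶ M, h ≫ f = g)
    -- generating: every object is a quotient of an object of the subcategory
    (hgen : ∀ X : A, ∃ (M : A) (_ : P M) (f : M ⟶ X), Epi f)
    (S : A) (hS : P S) :
    SchurSimpleIn P S ↔ Simple S := by
  constructor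
  · rintro ⟨hnz, hepi, _⟩
    constructor
    intro Y f hf
    constructor
    · intro hiso hf0
      apply hnz
      rw [IsZero.iff_id_eq_zero]
      calc 𝟙 S = inv f ≫ f := (IsIso.inv_hom_id _).symm
        _ = 0 := by simp [hf0]
    · intro hf0
      obtain ⟨M, hM, p, hp⟩ := hgen Y
      have hpf : p ≫ f ≠ 0 := by
        intro h
        have : p ≫ f = p ≫ 0 := by simpa using h
        exact hf0 (by rwa [cancel_epi] at this)
      have : Epi (p ≫ f) := hepi M hM (p ≫ f) hpf
      have : Epi f := epi_of_epi p f
      exact isIso_of_mono_of_epi f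
  · intro hSimple
    refine ⟨Simple.not_isZero S, ?_, ?_⟩
    · intro X _ f hf
      exact epi_of_nonzero_to_simple hf
    · intro Y _ f hf
      exact mono_of_nonzero_from_simple hf
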